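/- The Gaussian density determines the sphere dimension of a shrinking cylinder: for all integers $k, m \ge 1$, if $d_k \le d_m$ then $k \ge m$; in particular, if $d_k = d_m$ then $k = m$, where $d_k = (k/(2e))^{k/2} \cdot 2\sqrt{\pi}/\Gamma((k+1)/2)$. -/

import Mathlib

/-!
Write `k = 2y` and `φ y = y (log y - 1)`, so that `d_k = 2√π · exp (φ y) / Γ(y + 1/2)`.
The step `d_{k+1} < d_k` then says `exp (φ (y + 1/2) - φ y) < Γ(y + 1) / Γ(y + 1/2)`.
Kershaw's bound `y + 1/4 < (Γ(y + 1) / Γ(y + 1/2))²` reduces this to the elementary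
`2 (φ (y + 1/2) - φ y) ≤ log (y + 1/4)`, a consequence of the Padé bound
`log (1 + x) ≤ x (x + 6) / (2 (2x + 3))`. Kershaw's bound in turn holds because
`(Γ(y + 1) / Γ(y + 1/2))² / (y + 1/4)` strictly decreases under `y ↦ y + 1` and tends to `1`,
the latter since log-convexity of `Γ` gives `y ≤ (Γ(y + 1) / Γ(y + 1/2))²`.
-/

open Real Set

namespace Real

lemma log_one_add_le_pade {x : ℝ} (hx : 0 ≤ x) :
    log (1 + x) ≤ x * (x + 6) / (2 * (2 * x + 3)) := by
  let gap : ℝ → ℝ := fun t => t * (t + 6) / (2 * (2 * t + 3)) - log (1 + t)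
  have hgap : ∀ t, 0 ≤ t →
      HasDerivAt gap ((4 * t ^ 2 + 12 * t + 36) / (4 * t + 6) ^ 2 - 1 / (1 + t)) t := by
    intro t ht
    have hnum := (hasDerivAt_id' t).fun_mul ((hasDerivAt_id' t).add_const 6)
    have hden := (((hasDerivAt_id' t).const_mul 2).add_const 3).const_mul 2
    refine ((hnum.fun_div hden (by positivity)).sub
      (((hasDerivAt_id' t).const_add 1).log (by positivity))).congr_deriv ?_
    field_simp
    ring
  have hmono : MonotoneOn gap (Ici 0) := by
    refine monotoneOn_of_hasDerivWithinAt_nonneg (convex_Ici 0)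
      (fun t ht => (hgap t ht).continuousAt.continuousWithinAt)
      (fun t ht => (hgap t (interior_subset ht)).hasDerivWithinAt) fun t ht => ?_
    rw [interior_Ici, mem_Ioi] at ht
    rw [sub_nonneg, div_le_div_iff₀ (by positivity) (by positivity)]
    nlinarith [pow_pos ht 3]
  simpa [gap] using hmono self_mem_Ici hx hx

lemma Gamma_add_half_sq_le {y : ℝ} (hy : 0 < y) :
    Gamma (y + 1/2) ^ 2 ≤ Gamma y * Gamma (y + 1) := by
  have h := Gamma_mul_add_mul_le_rpow_Gamma_mul_rpow_Gamma hy (by linarith : 0 < y + 1)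
    (by norm_num : (0 : ℝ) < 1/2) (by norm_num : (0 : ℝ) < 1/2) (by norm_num)
  rw [show 1/2 * y + 1/2 * (y + 1) = y + 1/2 by ring,
    ← mul_rpow (Gamma_pos_of_pos hy).le (Gamma_pos_of_pos (by linarith)).le, ← sqrt_eq_rpow,
    le_sqrt (Gamma_pos_of_pos (by linarith)).le (by positivity)] at h
  exact h

end Real

lemma two_mul_increment_le_log_add_quarter {y : ℝ} (hy : 0 < y) :
    2 * ((y + 1/2) * (log (y + 1/2) - 1) - y * (log y - 1)) ≤ log (y + 1/4) := by
  have hstep : 2 * y * (log (y + 1/2) - log y) ≤ (12 * y + 1) / (12 * y + 4) := by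
    rw [← log_div (by positivity) hy.ne']
    calc 2 * y * log ((y + 1/2) / y) = 2 * y * log (1 + 1 / (2 * y)) := by
          congr 2; field_simp
      _ ≤ 2 * y * (1 / (2 * y) * (1 / (2 * y) + 6) / (2 * (2 * (1 / (2 * y)) + 3))) := by
          gcongr; exact log_one_add_le_pade (by positivity)
      _ = (12 * y + 1) / (12 * y + 4) := by field_simp; ring
  have hquarter :
      log (y + 1/2) - log (y + 1/4) ≤ (24 * y + 7) / (2 * (4 * y + 1) * (12 * y + 5)) := by
    rw [← log_div (by positivity) (by positivity)]
    calc log ((y + 1/2) / (y + 1/4)) = log (1 + 1 / (4 * y + 1)) := by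
          congr 1; field_simp; ring
      _ ≤ 1 / (4 * y + 1) * (1 / (4 * y + 1) + 6) / (2 * (2 * (1 / (4 * y + 1)) + 3)) :=
          log_one_add_le_pade (by positivity)
      _ = (24 * y + 7) / (2 * (4 * y + 1) * (12 * y + 5)) := by field_simp; ring
  have hsum :
      (12 * y + 1) / (12 * y + 4) + (24 * y + 7) / (2 * (4 * y + 1) * (12 * y + 5)) ≤ 1 := by
    rw [div_add_div _ _ (by positivity) (by positivity), div_le_one (by positivity)]
    nlinarith
  linarith

section GammaHalfRatio

variable {y : ℝ}

noncomputable def gammaHalfRatio (y : ℝ) : ℝ := Gamma (y + 1) / Gamma (y + 1/2)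

lemma gammaHalfRatio_pos (hy : -1/2 < y) : 0 < gammaHalfRatio y :=
  div_pos (Gamma_pos_of_pos (by linarith)) (Gamma_pos_of_pos (by linarith))

lemma le_gammaHalfRatio_sq (hy : 0 < y) : y ≤ gammaHalfRatio y ^ 2 := by
  have hΓ : 0 < Gamma (y + 1/2) := Gamma_pos_of_pos (by linarith)
  rw [gammaHalfRatio, div_pow, le_div_iff₀ (pow_pos hΓ 2)]
  calc y * Gamma (y + 1/2) ^ 2 ≤ y * (Gamma y * Gamma (y + 1)) :=
        mul_le_mul_of_nonneg_left (Gamma_add_half_sq_le hy) hy.le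
    _ = Gamma (y + 1) ^ 2 := by rw [Gamma_add_one hy.ne']; ring

lemma gammaHalfRatio_add_one (hy : -1/2 < y) :
    gammaHalfRatio (y + 1) = (y + 1) / (y + 1/2) * gammaHalfRatio y := by
  rw [gammaHalfRatio, gammaHalfRatio, Gamma_add_one (s := y + 1) (by linarith),
    show y + 1 + 1/2 = y + 1/2 + 1 by ring, Gamma_add_one (s := y + 1/2) (by linarith)]
  have : Gamma (y + 1/2) ≠ 0 := (Gamma_pos_of_pos (by linarith)).ne'
  field_simp

lemma gammaHalfRatio_sq_div_add_one_lt (hy : -1/4 < y) :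
    gammaHalfRatio (y + 1) ^ 2 / (y + 1 + 1/4) < gammaHalfRatio y ^ 2 / (y + 1/4) := by
  have hpos := gammaHalfRatio_pos (y := y) (by linarith)
  rw [gammaHalfRatio_add_one (by linarith), div_lt_div_iff₀ (by linarith) (by linarith)]
  calc ((y + 1) / (y + 1/2) * gammaHalfRatio y) ^ 2 * (y + 1/4)
      = gammaHalfRatio y ^ 2 * ((y + 1) ^ 2 * (y + 1/4) / (y + 1/2) ^ 2) := by
        rw [mul_pow, div_pow]; ring
    _ < gammaHalfRatio y ^ 2 * (y + 1 + 1/4) := by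
        -- the two cubics `(y + 1)² (y + 1/4)` and `(y + 1/2)² (y + 5/4)` differ only by `1/16`
        gcongr
        rw [div_lt_iff₀ (by nlinarith)]
        nlinarith

lemma one_le_gammaHalfRatio_sq_div (hy : 0 < y) :
    1 ≤ gammaHalfRatio y ^ 2 / (y + 1/4) := by
  let s : ℕ → ℝ := fun n => gammaHalfRatio (y + n) ^ 2 / (y + n + 1/4)
  have hanti : Antitone s := antitone_nat_of_succ_le fun n => by
    have hyn : -1/4 < y + n := by linarith [(n.cast_nonneg : (0 : ℝ) ≤ n)]
    simpa [s, add_assoc] using (gammaHalfRatio_sq_div_add_one_lt hyn).le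
  have hlower (n : ℕ) : (n : ℝ) / (n + 1/4) ≤ s n :=
    calc (n : ℝ) / (n + 1/4) ≤ (y + n) / (y + n + 1/4) := by
          rw [div_le_div_iff₀ (by positivity) (by positivity)]; nlinarith
      _ ≤ s n := by
          have := le_gammaHalfRatio_sq (y := y + n) (by positivity)
          simp only [s]; gcongr
  refine le_of_tendsto' (tendsto_natCast_div_add_atTop (1/4 : ℝ)) fun n => ?_
  simpa [s] using (hlower n).trans (hanti n.zero_le)

lemma add_quarter_lt_gammaHalfRatio_sq (hy : -1/4 < y) : y + 1/4 < gammaHalfRatio y ^ 2 := by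
  rw [← one_lt_div (by linarith)]
  calc 1 ≤ gammaHalfRatio (y + 1) ^ 2 / (y + 1 + 1/4) :=
        one_le_gammaHalfRatio_sq_div (by linarith)
    _ < gammaHalfRatio y ^ 2 / (y + 1/4) := gammaHalfRatio_sq_div_add_one_lt hy

lemma exp_increment_lt_gammaHalfRatio (hy : 0 < y) :
    exp ((y + 1/2) * (log (y + 1/2) - 1) - y * (log y - 1)) < gammaHalfRatio y := by
  refine lt_of_pow_lt_pow_left₀ 2 (gammaHalfRatio_pos (by linarith)).le ?_
  calc exp ((y + 1/2) * (log (y + 1/2) - 1) - y * (log y - 1)) ^ 2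
      = exp (2 * ((y + 1/2) * (log (y + 1/2) - 1) - y * (log y - 1))) := by
        rw [← exp_nat_mul]; norm_num
    _ ≤ y + 1/4 := (le_log_iff_exp_le (by linarith)).1 (two_mul_increment_le_log_add_quarter hy)
    _ < gammaHalfRatio y ^ 2 := add_quarter_lt_gammaHalfRatio_sq (by linarith)

end GammaHalfRatio

noncomputable def gaussianDensity (x : ℝ) : ℝ :=
  (x / (2 * exp 1)) ^ (x / 2) * (2 * sqrt π / Gamma ((x + 1) / 2))

lemma gaussianDensity_two_mul {y : ℝ} (hy : 0 < y) :
    gaussianDensity (2 * y) = 2 * sqrt π * exp (y * (log y - 1)) / Gamma (y + 1/2) := by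
  rw [gaussianDensity, show 2 * y / (2 * exp 1) = y / exp 1 by field_simp,
    show 2 * y / 2 = y by ring, show (2 * y + 1) / 2 = y + 1/2 by ring,
    rpow_def_of_pos (by positivity), log_div hy.ne' (exp_pos 1).ne', log_exp,
    mul_comm (log y - 1)]
  ring

lemma gaussianDensity_add_one_lt {x : ℝ} (hx : 0 < x) :
    gaussianDensity (x + 1) < gaussianDensity x := by
  obtain ⟨y, hy, rfl⟩ : ∃ y, 0 < y ∧ x = 2 * y := ⟨x / 2, by positivity, by ring⟩
  have hΓ : 0 < Gamma (y + 1/2) := Gamma_pos_of_pos (by linarith)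
  have hratio := exp_increment_lt_gammaHalfRatio hy
  rw [gammaHalfRatio, lt_div_iff₀ hΓ] at hratio
  rw [show 2 * y + 1 = 2 * (y + 1/2) by ring, gaussianDensity_two_mul hy,
    gaussianDensity_two_mul (by positivity), show y + 1/2 + 1/2 = y + 1 by ring,
    div_lt_div_iff₀ (Gamma_pos_of_pos (by linarith)) hΓ]
  calc 2 * √π * exp ((y + 1/2) * (log (y + 1/2) - 1)) * Gamma (y + 1/2)
      = 2 * √π * exp (y * (log y - 1)) *
          (exp ((y + 1/2) * (log (y + 1/2) - 1) - y * (log y - 1)) * Gamma (y + 1/2)) := by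
        rw [exp_sub]; field_simp
    _ < 2 * √π * exp (y * (log y - 1)) * Gamma (y + 1) := by gcongr

lemma strictAntiOn_gaussianDensity_natCast :
    StrictAntiOn (fun k : ℕ => gaussianDensity k) (Ici 1) :=
  strictAntiOn_Ici_of_lt_pred fun k hk => by
    obtain ⟨j, rfl⟩ : ∃ j, k = j + 1 := ⟨k - 1, by omega⟩
    have hj : (0 : ℝ) < j := by exact_mod_cast (by omega : 0 < j)
    simpa using gaussianDensity_add_one_lt hj

/-- The Gaussian density determines the sphere dimension of a shrinking cylinder:
with `d_k = (k/(2e))^{k/2} · 2√π / Γ((k+1)/2)`, if `d k ≤ d m` then `k ≥ m`;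
in particular `d k = d m` implies `k = m`. -/
theorem gaussian_density_determines_dimension (d : ℕ → ℝ)
    (hd : ∀ k : ℕ, d k = ((k : ℝ) / (2 * Real.exp 1)) ^ ((k : ℝ) / 2) *
      (2 * Real.sqrt Real.pi / Real.Gamma (((k : ℝ) + 1) / 2)))
    (k m : ℕ) (hk : 1 ≤ k) (hm : 1 ≤ m) :
    (d k ≤ d m → m ≤ k) ∧ (d k = d m → k = m) := by
  obtain rfl : d = fun k : ℕ => gaussianDensity k := funext hd
  exact ⟨(strictAntiOn_gaussianDensity_natCast.le_iff_ge hk hm).1,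
    fun h => strictAntiOn_gaussianDensity_natCast.injOn hk hm h⟩
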